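/- arXiv:1303.5136 — 2 statements merged into one kernel-verified Lean document; each statement's English description precedes it below -/
import Mathlib

section
/- Let k ≥ 4 and let G be a graph with maximum degree at most k containing a path x u v w y where u, v, w have degree 2 in G and x has degree at most k−1. If the square of G − u − v is (k+1)-choosable, then the square of G is (k+1)-choosable. -/
open SimpleGraph

/-- The square of a graph: vertices adjacent iff at distance at most 2. -/
def SimpleGraph.square {V : Type*} (G : SimpleGraph V) : SimpleGraph V where
  Adj u v := u ≠ v ∧ (G.Adj u v ∨ ∃ w, G.Adj u w ∧ G.Adj w v)
  symm := by
    constructor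
    rintro u v ⟨h, h2 | ⟨w, hw1, hw2⟩⟩
    · exact ⟨h.symm, Or.inl h2.symm⟩
    · exact ⟨h.symm, Or.inr ⟨w, hw2.symm, hw1.symm⟩⟩
  loopless := ⟨fun v h => h.1 rfl⟩

/-- A graph is `k`-choosable if from every assignment of lists of size at least `k`
there is a proper coloring. -/
def SimpleGraph.Choosable {V : Type*} (G : SimpleGraph V) (k : ℕ) : Prop :=
  ∀ L : V → Finset ℕ, (∀ v, k ≤ (L v).card) →
    ∃ c : V → ℕ, (∀ v, c v ∈ L v) ∧ ∀ ⦃u v⦄, G.Adj u v → c u ≠ c v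

/-- `G.MadLT x` means the maximum average degree of `G` is less than `x`:
every nonempty subgraph `H` satisfies `2|E(H)|/|V(H)| < x`. -/
def SimpleGraph.MadLT {V : Type*} (G : SimpleGraph V) (x : ℝ) : Prop :=
  ∀ H : G.Subgraph, H.verts.Nonempty →
    2 * (H.edgeSet.ncard : ℝ) / (H.verts.ncard : ℝ) < x

/-! Every vertex outside `{u, v}` has at most one neighbour among the other vertices, so the
square of `G - u - v` is the square of `G` restricted to `V ∖ {u, v}`, and a colouring of it from
the lists is a partial colouring of `G²`. It extends greedily: `u` sees in `G²` only `v` (not yet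
coloured), `x`, `w` and the at most `k - 2` other neighbours of `x`, i.e. at most `k` coloured
vertices; then `v` sees only `u`, `x`, `w`, `y`, and `4 < k + 1`. -/

namespace SimpleGraph

variable {V : Type*} {G : SimpleGraph V}

theorem eq_or_eq_of_ncard_neighborSet_eq_two {a p q z : V}
    (h : (G.neighborSet a).ncard = 2) (hp : G.Adj a p) (hq : G.Adj a q) (hpq : p ≠ q)
    (hz : G.Adj a z) : z = p ∨ z = q := by
  have hN : ({p, q} : Set V) = G.neighborSet a :=
    Set.eq_of_subset_of_ncard_le (Set.insert_subset hp (Set.singleton_subset_iff.2 hq))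
      (by rw [h, Set.ncard_pair hpq]) (Set.finite_of_ncard_ne_zero (by omega))
  have hz' : z ∈ G.neighborSet a := hz
  simpa [← hN] using hz'

theorem square_adj_cases {a p q z : V} (hN : ∀ t, G.Adj a t → t = p ∨ t = q)
    (h : G.square.Adj a z) : z = p ∨ z = q ∨ G.Adj p z ∨ G.Adj q z := by
  obtain ⟨-, hz | ⟨t, hat, htz⟩⟩ := h
  · exact (hN z hz).imp_right Or.inl
  · rcases hN t hat with rfl | rfl
    · exact Or.inr (Or.inr (Or.inl htz))
    · exact Or.inr (Or.inr (Or.inr htz))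

theorem square_induce_adj {s : Set V}
    (hs : ∀ t ∉ s, (G.neighborSet t ∩ s).Subsingleton) {a b : s}
    (h : G.square.Adj a b) : (G.induce s).square.Adj a b := by
  obtain ⟨hne, hab | ⟨t, hat, htb⟩⟩ := h
  · exact ⟨Subtype.coe_ne_coe.1 hne, Or.inl hab⟩
  · by_cases ht : t ∈ s
    · exact ⟨Subtype.coe_ne_coe.1 hne, Or.inr ⟨⟨t, ht⟩, hat, htb⟩⟩
    · exact absurd (hs t ht ⟨hat.symm, a.2⟩ ⟨htb, b.2⟩) hne

def IsListColoringOn (H : SimpleGraph V) (L : V → Finset ℕ) (C : Set V) (c : V → ℕ) : Prop :=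
  (∀ z ∈ C, c z ∈ L z) ∧ ∀ a ∈ C, ∀ b ∈ C, H.Adj a b → c a ≠ c b

theorem exists_isListColoringOn_square {s : Set V}
    (hs : ∀ t ∉ s, (G.neighborSet t ∩ s).Subsingleton) {m : ℕ}
    (hm : (G.induce s).square.Choosable m) {L : V → Finset ℕ} (hL : ∀ z, m ≤ (L z).card) :
    ∃ c, G.square.IsListColoringOn L s c := by
  classical
  obtain ⟨c, hcL, hc⟩ := hm (fun z => L z) (fun z => hL z)
  refine ⟨fun z => if hz : z ∈ s then c ⟨z, hz⟩ else 0, fun z hz => ?_, fun a ha b hb hab => ?_⟩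
  · simpa [hz] using hcL ⟨z, hz⟩
  · simpa [ha, hb] using
      hc (u := ⟨a, ha⟩) (v := ⟨b, hb⟩) (square_induce_adj (a := ⟨a, ha⟩) hs hab)

theorem IsListColoringOn.exists_update [DecidableEq V] {H : SimpleGraph V} {L : V → Finset ℕ}
    {C : Set V} {c : V → ℕ} (hc : H.IsListColoringOn L C c) {p : V} (T : Finset V)
    (hT : ∀ z ∈ C, H.Adj p z → z ∈ T) (hcard : T.card < (L p).card) :
    ∃ a, H.IsListColoringOn L (insert p C) (Function.update c p a) := by
  obtain ⟨a, haL, haT⟩ := Finset.exists_mem_notMem_of_card_lt_card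
    (lt_of_le_of_lt Finset.card_image_le hcard : (T.image c).card < (L p).card)
  have hpa : ∀ z ∈ C, H.Adj p z → a ≠ c z := fun z hz hpz h =>
    haT (Finset.mem_image.2 ⟨z, hT z hz hpz, h.symm⟩)
  refine ⟨a, fun z hz => ?_, fun z hz z' hz' hzz' => ?_⟩
  · rcases eq_or_ne z p with rfl | hzp
    · simpa using haL
    · simpa [hzp] using hc.1 z (Set.mem_of_mem_insert_of_ne hz hzp)
  · rcases eq_or_ne z p with rfl | hzp
    · have hz'z : z' ≠ z := hzz'.ne.symm
      simpa [hz'z] using hpa z' (Set.mem_of_mem_insert_of_ne hz' hz'z) hzz'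
    rcases eq_or_ne z' p with rfl | hz'p
    · simpa [hzp] using (hpa z (Set.mem_of_mem_insert_of_ne hz hzp) hzz'.symm).symm
    simpa [hzp, hz'p] using
      hc.2 z (Set.mem_of_mem_insert_of_ne hz hzp) z' (Set.mem_of_mem_insert_of_ne hz' hz'p) hzz'

section Thread

variable {x u v w y : V}

theorem subsingleton_neighborSet_inter_of_thread (hNu : ∀ t, G.Adj u t → t = x ∨ t = v)
    (hNv : ∀ t, G.Adj v t → t = u ∨ t = w) :
    ∀ t ∉ {z | z ≠ u ∧ z ≠ v}, (G.neighborSet t ∩ {z | z ≠ u ∧ z ≠ v}).Subsingleton := by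
  intro t ht a ⟨hta, hau, hav⟩ b ⟨htb, hbu, hbv⟩
  obtain rfl | rfl : t = u ∨ t = v := by simpa [or_iff_not_imp_left] using ht
  · rw [(hNu a hta).resolve_right hav, (hNu b htb).resolve_right hbv]
  · rw [(hNv a hta).resolve_left hau, (hNv b htb).resolve_left hbu]

theorem square_adj_first_of_thread [DecidableEq V] [Fintype (G.neighborSet x)]
    (hNu : ∀ t, G.Adj u t → t = x ∨ t = v) (hNv : ∀ t, G.Adj v t → t = u ∨ t = w) {z : V}
    (h : G.square.Adj u z) (hzv : z ≠ v) :
    z ∈ insert x (insert w ((G.neighborFinset x).erase u)) := by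
  simp only [Finset.mem_insert, Finset.mem_erase, mem_neighborFinset]
  rcases square_adj_cases hNu h with rfl | rfl | hxz | hvz
  · exact Or.inl rfl
  · exact absurd rfl hzv
  · exact Or.inr (Or.inr ⟨h.1.symm, hxz⟩)
  · exact Or.inr (Or.inl ((hNv z hvz).resolve_left h.1.symm))

theorem card_insert_insert_erase_neighborFinset_le [DecidableEq V] [Fintype (G.neighborSet x)]
    (hxu : G.Adj x u) :
    (insert x (insert w ((G.neighborFinset x).erase u))).card ≤ G.degree x + 1 := by
  have := Finset.card_erase_of_mem ((G.mem_neighborFinset x u).2 hxu)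
  have := Finset.card_insert_le x (insert w ((G.neighborFinset x).erase u))
  have := Finset.card_insert_le w ((G.neighborFinset x).erase u)
  have := G.degree_pos_iff_exists_adj x |>.2 ⟨u, hxu⟩
  rw [card_neighborFinset_eq_degree] at *
  omega

theorem square_adj_middle_of_thread (hNu : ∀ t, G.Adj u t → t = x ∨ t = v)
    (hNv : ∀ t, G.Adj v t → t = u ∨ t = w) (hNw : ∀ t, G.Adj w t → t = v ∨ t = y)
    [DecidableEq V] {z : V} (h : G.square.Adj v z) : z ∈ ({u, x, w, y} : Finset V) := by
  simp only [Finset.mem_insert, Finset.mem_singleton]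
  rcases square_adj_cases hNv h with rfl | rfl | huz | hwz
  · exact Or.inl rfl
  · exact Or.inr (Or.inr (Or.inl rfl))
  · exact Or.inr (Or.inl ((hNu z huz).resolve_right h.1.symm))
  · exact Or.inr (Or.inr (Or.inr ((hNw z hwz).resolve_left h.1.symm)))

end Thread

end SimpleGraph

theorem threeThread_reducible_general {V : Type*} [Fintype V] (k : ℕ) (hk : 4 ≤ k)
    (G : SimpleGraph V)
    (x u v w y : V) (hnodup : ([x, u, v, w, y] : List V).Nodup)
    (hxu : G.Adj x u) (huv : G.Adj u v) (hvw : G.Adj v w) (hwy : G.Adj w y)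
    (hu : (G.neighborSet u).ncard = 2) (hv : (G.neighborSet v).ncard = 2)
    (hw : (G.neighborSet w).ncard = 2)
    (hx : (G.neighborSet x).ncard ≤ k - 1)
    (hred : ((G.induce {z | z ≠ u ∧ z ≠ v}).square.Choosable (k + 1))) :
    G.square.Choosable (k + 1) := by
  classical
  simp only [List.nodup_cons, List.mem_cons, List.not_mem_nil, List.nodup_nil, and_true,
    not_or, or_false] at hnodup
  obtain ⟨⟨-, hxv, -⟩, ⟨-, huw, -⟩, ⟨-, hvy⟩, -⟩ := hnodup
  have hNu := fun t => eq_or_eq_of_ncard_neighborSet_eq_two (z := t) hu hxu.symm huv hxv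
  have hNv := fun t => eq_or_eq_of_ncard_neighborSet_eq_two (z := t) hv huv.symm hvw huw
  have hNw := fun t => eq_or_eq_of_ncard_neighborSet_eq_two (z := t) hw hvw.symm hwy hvy
  have hdeg : G.degree x ≤ k - 1 := by
    rwa [← card_neighborFinset_eq_degree, neighborFinset_def, ← Set.ncard_eq_toFinset_card']
  intro L hL
  obtain ⟨c₀, hc₀⟩ :=
    exists_isListColoringOn_square (subsingleton_neighborSet_inter_of_thread hNu hNv) hred hL
  obtain ⟨a, hc₁⟩ := hc₀.exists_update _
    (fun z hz h => square_adj_first_of_thread hNu hNv h hz.2)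
    (by have := card_insert_insert_erase_neighborFinset_le (w := w) hxu; have := hL u; omega)
  obtain ⟨b, hc₂⟩ := hc₁.exists_update _
    (fun z _ h => square_adj_middle_of_thread hNu hNv hNw h)
    (by linarith [hL v, Finset.card_le_four (a := u) (b := x) (c := w) (d := y)])
  have huniv : insert v (insert u {z | z ≠ u ∧ z ≠ v}) = Set.univ := by
    ext z; simp only [Set.mem_insert_iff, Set.mem_ofPred_eq, Set.mem_univ]; tauto
  rw [huniv] at hc₂
  exact ⟨_, fun z => hc₂.1 z trivial, fun z z' h => hc₂.2 z trivial z' trivial h⟩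

/-- (C2): a 3-thread with an endpoint of degree at most `k-1` is `(k+1)`-reducible. -/
theorem threeThread_reducible {V : Type*} [Fintype V] (k : ℕ) (hk : 4 ≤ k)
    (G : SimpleGraph V) (hΔ : ∀ z, (G.neighborSet z).ncard ≤ k)
    (x u v w y : V) (hnodup : ([x, u, v, w, y] : List V).Nodup)
    (hxu : G.Adj x u) (huv : G.Adj u v) (hvw : G.Adj v w) (hwy : G.Adj w y)
    (hu : (G.neighborSet u).ncard = 2) (hv : (G.neighborSet v).ncard = 2)
    (hw : (G.neighborSet w).ncard = 2)
    (hx : (G.neighborSet x).ncard ≤ k - 1)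
    (hred : ((G.induce {z | z ≠ u ∧ z ≠ v}).square.Choosable (k + 1))) :
    G.square.Choosable (k + 1) :=
  threeThread_reducible_general k hk G x u v w y hnodup hxu huv hvw hwy hu hv hw hx hred
end

section
/- Let k ≥ 5. Suppose G has maximum degree at most k and contains a cycle v₁v₂…v₃ℓ such that d(vᵢ) ≤ k−1 when 3 divides i and d(vᵢ) = 2 otherwise. If the square of the graph obtained from G by deleting all the degree-2 vertices of this cycle is (k+1)-choosable, then G² is (k+1)-choosable. -/
open SimpleGraph

/-!
Let `S` be what is left of `G` after deleting the `2ℓ` degree-2 vertices of the cycle. Each deleted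
vertex has a deleted neighbor, so two vertices of `S` at distance 2 in `G` are also at distance 2
in `G[S]`, and a coloring of `G[S]²` is proper in `G²`. A deleted vertex sees at most `k - 1`
vertices of `S` in `G²` (its own hub, the hub two steps along the cycle, and the at most `k - 3`
neighbors of its own hub off the cycle), so at least two colors of its list stay available. In `G²` the deleted vertices `v₁, v₂, v₄, v₅, …`
induce a subgraph of a cycle of even length `2ℓ`, and even cycles are 2-choosable.
-/

/-- The `t`-th positive integer not divisible by `3`, counting from `t = 0`. -/
def nonMultipleOfThree (t : ℕ) : ℕ := t + t / 2 + 1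

theorem not_three_dvd_nonMultipleOfThree (t : ℕ) : ¬ (3 : ℤ) ∣ (nonMultipleOfThree t : ℕ) := by
  simp only [nonMultipleOfThree]; omega

section PeriodicExtension

variable {α : Type*} {v : ℕ → α} {n : ℕ}

/-- The values `v 1, …, v n` (not `v 0`), repeated with period `n` along `ℤ`. -/
def periodicExtension (v : ℕ → α) (n : ℕ) (j : ℤ) : α := v ((j - 1) % n + 1).toNat

theorem periodicExtension_of_mem {j : ℕ} (h1 : 1 ≤ j) (h2 : j ≤ n) :
    periodicExtension v n j = v j := by
  rw [periodicExtension, Int.emod_eq_of_lt (by omega) (by omega)]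
  congr
  omega

theorem exists_periodicExtension_eq (hn : 0 < n) (j : ℤ) :
    ∃ i : ℕ, 1 ≤ i ∧ i ≤ n ∧ (n : ℤ) ∣ j - i ∧ periodicExtension v n j = v i := by
  have h0 : 0 ≤ (j - 1) % n := Int.emod_nonneg _ (by omega)
  have h1 : (j - 1) % n < n := Int.emod_lt_of_pos _ (by omega)
  refine ⟨((j - 1) % n + 1).toNat, by omega, by omega, ?_, rfl⟩
  rw [Int.toNat_of_nonneg (by omega), show j - ((j - 1) % n + 1) = j - 1 - (j - 1) % n by ring]
  exact Int.dvd_self_sub_emod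

theorem periodicExtension_eq_iff (hn : 0 < n) (hinj : Set.InjOn v (Set.Icc 1 n)) {i j : ℤ} :
    periodicExtension v n i = periodicExtension v n j ↔ (n : ℤ) ∣ j - i := by
  obtain ⟨a, ha1, ha2, hia, hva⟩ := exists_periodicExtension_eq (v := v) hn i
  obtain ⟨b, hb1, hb2, hjb, hvb⟩ := exists_periodicExtension_eq (v := v) hn j
  rw [hva, hvb]
  constructor
  · intro h
    rw [hinj ⟨ha1, ha2⟩ ⟨hb1, hb2⟩ h] at hia
    simpa using dvd_sub hjb hia
  · intro h
    have hab : (n : ℤ) ∣ b - a := by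
      have := dvd_add (dvd_sub h hjb) hia
      rwa [show j - i - (j - b) + (i - a) = b - a by ring] at this
    have := Int.eq_zero_of_abs_lt_dvd hab (abs_lt.2 ⟨by omega, by omega⟩)
    rw [show b = a by omega]

theorem exists_periodicExtension_three_mul_eq {l : ℕ} (hl : 1 ≤ l) (j : ℤ) :
    ∃ i : ℕ, 1 ≤ i ∧ i ≤ 3 * l ∧ (3 : ℤ) ∣ j - i ∧ periodicExtension v (3 * l) j = v i := by
  obtain ⟨i, hi1, hi2, hdvd, hi⟩ := exists_periodicExtension_eq (v := v) (by omega : 0 < 3 * l) j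
  exact ⟨i, hi1, hi2, (Dvd.intro (l : ℤ) rfl).trans (by exact_mod_cast hdvd), hi⟩

end PeriodicExtension

namespace SimpleGraph

variable {V W : Type*}

def ListColorable (G : SimpleGraph V) (L : V → Finset ℕ) : Prop :=
  ∃ c : V → ℕ, (∀ v, c v ∈ L v) ∧ ∀ ⦃u v⦄, G.Adj u v → c u ≠ c v

theorem ListColorable.of_comap {H : SimpleGraph V} {H' : SimpleGraph W} {w : W → V}
    (hw : Function.Surjective w) (hle : H.comap w ≤ H') {L : V → Finset ℕ}
    (h : H'.ListColorable (L ∘ w)) : H.ListColorable L := by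
  obtain ⟨c, hcL, hc⟩ := h
  refine ⟨c ∘ Function.surjInv hw, fun x => ?_, fun x y hxy => hc (hle ?_)⟩
  · simpa [Function.surjInv_eq hw x] using hcL (Function.surjInv hw x)
  · simpa [Function.surjInv_eq hw] using hxy

theorem Choosable.of_comap {H : SimpleGraph V} {H' : SimpleGraph W} {w : W → V}
    (hw : Function.Surjective w) (hle : H.comap w ≤ H') {k : ℕ} (h : H'.Choosable k) :
    H.Choosable k :=
  fun L hL => ListColorable.of_comap hw hle (h (L ∘ w) fun _ => hL _)

theorem Choosable.mono_left {H H' : SimpleGraph V} (hle : H ≤ H') {k : ℕ} (h : H'.Choosable k) :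
    H.Choosable k :=
  Choosable.of_comap Function.surjective_id hle h

/-- Color `S` first; every vertex outside `S` then loses at most `m - d` colors of its list. -/
theorem Choosable.of_induce [Finite V] {H : SimpleGraph V} (S : Set V) {m d : ℕ}
    (hS : (H.induce S).Choosable m) (hSc : (H.induce Sᶜ).Choosable d)
    (hdeg : ∀ x ∉ S, (H.neighborSet x ∩ S).ncard + d ≤ m) : H.Choosable m := by
  classical
  intro L hL
  obtain ⟨c₀, hc₀L, hc₀⟩ := hS (fun x => L x) fun x => hL x
  let e : V → ℕ := fun y => if h : y ∈ S then c₀ ⟨y, h⟩ else 0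
  let used : V → Finset ℕ := fun x => (Set.toFinite (H.neighborSet x ∩ S)).toFinset.image e
  have hused : ∀ x ∉ S, (used x).card + d ≤ m := fun x hx =>
    (Nat.add_le_add_right (Finset.card_image_le.trans (Set.ncard_eq_toFinset_card _ _).ge) d).trans
      (hdeg x hx)
  obtain ⟨c₁, hc₁L, hc₁⟩ := hSc (fun x => L x \ used x) fun x => by
    have := Finset.le_card_sdiff (used x) (L x)
    have := hused x x.2
    have := hL x
    omega
  have hmixed : ∀ x (hx : x ∈ S) y (hy : y ∉ S), H.Adj x y → c₀ ⟨x, hx⟩ ≠ c₁ ⟨y, hy⟩ := by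
    intro x hx y hy hxy he
    refine (Finset.mem_sdiff.1 (hc₁L ⟨y, hy⟩)).2 (Finset.mem_image.2 ⟨x, ?_, ?_⟩)
    · exact (Set.Finite.mem_toFinset _).2 ⟨hxy.symm, hx⟩
    · simp [e, hx, he]
  refine ⟨fun y => if h : y ∈ S then c₀ ⟨y, h⟩ else c₁ ⟨y, h⟩, fun y => ?_, fun x y hxy => ?_⟩
  · by_cases hy : y ∈ S
    · simpa [hy] using hc₀L ⟨y, hy⟩
    · simpa [hy] using (Finset.mem_sdiff.1 (hc₁L ⟨y, hy⟩)).1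
  · by_cases hx : x ∈ S <;> by_cases hy : y ∈ S <;> simp only [hx, hy, dite_true, dite_false]
    · exact hc₀ (u := ⟨x, hx⟩) (v := ⟨y, hy⟩) hxy
    · exact hmixed x hx y hy hxy
    · exact (hmixed y hy x hx hxy.symm).symm
    · exact hc₁ (u := ⟨x, hx⟩) (v := ⟨y, hy⟩) hxy


theorem cycleGraph_adj_iff_val {n : ℕ} (hn : 2 ≤ n) {s t : Fin n} :
    (cycleGraph n).Adj s t ↔ s.val + 1 = t.val ∨ t.val + 1 = s.val ∨
      (s.val + 1 = n ∧ t.val = 0) ∨ (t.val + 1 = n ∧ s.val = 0) := by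
  obtain ⟨m, rfl⟩ : ∃ m, n = m + 2 := ⟨n - 2, by omega⟩
  rw [cycleGraph_adj, sub_eq_iff_eq_add', sub_eq_iff_eq_add', Fin.ext_iff, Fin.ext_iff,
    Fin.val_add_one, Fin.val_add_one]
  split_ifs <;> simp only [Fin.ext_iff, Fin.val_last] at * <;> omega

open Fin.NatCast in
theorem cycleGraph_listColorable_of_mem_of_notMem {m : ℕ} {L : Fin (m + 2) → Finset ℕ}
    (hL : ∀ x, 2 ≤ (L x).card) {a : ℕ} (ha : a ∈ L 0) (ha' : a ∉ L (-1)) :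
    (cycleGraph (m + 2)).ListColorable L := by
  choose pick hpick hne using fun (j : ℕ) (b : ℕ) => Finset.exists_mem_ne (hL j) b
  -- greedily along the path `0, 1, …, m + 1`; the closing edge is safe because `a ∉ L (-1)`
  let g : ℕ → ℕ := fun j => Nat.rec a (fun j b => pick (j + 1) b) j
  refine ⟨fun x => g x.val, fun ⟨j, hj⟩ => ?_, fun x y hxy => ?_⟩
  · cases j with
    | zero => exact ha
    | succ j =>
      have h := hpick (j + 1) (g j)
      rwa [Fin.cast_val_eq_self (⟨j + 1, hj⟩ : Fin (m + 2))] at h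
  · show g x.val ≠ g y.val
    have hlast : g (m + 1) ∈ L (-1) := by
      have h := hpick (m + 1) (g m)
      rwa [show ((m + 1 : ℕ) : Fin (m + 2)) = -1 by
        rw [Fin.ext_iff, Fin.val_natCast, Fin.coe_neg_one, Nat.mod_eq_of_lt (by omega)]] at h
    have hfirst : g 0 = a := rfl
    rcases (cycleGraph_adj_iff_val (by omega)).1 hxy with h | h | ⟨hx, hy⟩ | ⟨hy, hx⟩
    · rw [← h]; exact (hne _ _).symm
    · rw [← h]; exact hne _ _
    · rw [show x.val = m + 1 by omega, hy, hfirst]; exact fun he => ha' (he ▸ hlast)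
    · rw [show y.val = m + 1 by omega, hx, hfirst]; exact fun he => ha' (he ▸ hlast)

theorem cycleGraph_listColorable_of_adj {m : ℕ} {L : Fin (m + 2) → Finset ℕ}
    (hL : ∀ x, 2 ≤ (L x).card) {s t : Fin (m + 2)} (hst : (cycleGraph (m + 2)).Adj s t)
    {a : ℕ} (hs : a ∈ L s) (ht : a ∉ L t) : (cycleGraph (m + 2)).ListColorable L := by
  -- rotate (and possibly reflect) the cycle so that `s` becomes `0` and `t` becomes `-1`
  rcases hst with h | h
  · refine ListColorable.of_comap (w := (s + ·)) (fun y => ⟨y - s, add_sub_cancel _ _⟩) ?_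
      (cycleGraph_listColorable_of_mem_of_notMem (fun _ => hL _) (a := a) ?_ ?_)
    · intro x y hxy
      simpa only [comap_adj, cycleGraph_adj, add_sub_add_left_eq_sub] using hxy
    · simpa using hs
    · simpa [← sub_eq_add_neg, (sub_eq_iff_eq_add'.1 h)] using ht
  · refine ListColorable.of_comap (w := (s - ·)) (fun y => ⟨s - y, sub_sub_cancel _ _⟩) ?_
      (cycleGraph_listColorable_of_mem_of_notMem (fun _ => hL _) (a := a) ?_ ?_)
    · intro x y hxy
      simpa only [comap_adj, cycleGraph_adj, sub_sub_sub_cancel_left, or_comm] using hxy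
    · simpa using hs
    · simpa [(sub_eq_iff_eq_add.1 h), add_comm] using ht

open Fin.NatCast in
theorem cycleGraph_choosable_two {n : ℕ} (hn : Even n) : (cycleGraph n).Choosable 2 := by
  intro L hL
  obtain _ | _ | m := n
  · exact ⟨fun _ => 0, fun x => x.elim0, fun x => x.elim0⟩
  · exact absurd hn (by decide)
  by_cases h : ∃ s t, (cycleGraph (m + 2)).Adj s t ∧ ¬ L s ⊆ L t
  · obtain ⟨s, t, hst, hsub⟩ := h
    obtain ⟨a, hs, ht⟩ := Finset.not_subset.1 hsub
    exact cycleGraph_listColorable_of_adj hL hst hs ht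
  -- otherwise all lists coincide and the even cycle is properly 2-colored by parity
  push Not at h
  have hconst : ∀ j : ℕ, L j = L 0 := by
    intro j
    induction j with
    | zero => rfl
    | succ j ih =>
      have hadj : (cycleGraph (m + 2)).Adj ((j + 1 : ℕ) : Fin (m + 2)) j := by
        push_cast
        exact cycleGraph_adj.2 (Or.inl (add_sub_cancel_left _ _))
      rw [← ih]
      exact (h _ _ hadj).antisymm (h _ _ hadj.symm)
  obtain ⟨a, ha, b, hb, hab⟩ := Finset.one_lt_card.1 (hL 0)
  obtain ⟨r, hr⟩ := hn
  refine ⟨fun x => if x.val % 2 = 0 then a else b, fun x => ?_, fun x y hxy => ?_⟩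
  · have hx : L x = L 0 := by simpa using hconst x.val
    show (if x.val % 2 = 0 then a else b) ∈ L x
    rw [hx]
    split_ifs <;> assumption
  · show (if x.val % 2 = 0 then a else b) ≠ (if y.val % 2 = 0 then a else b)
    rcases (cycleGraph_adj_iff_val (by omega)).1 hxy with h | h | h | h <;>
      split_ifs <;> omega


section Square

variable {G : SimpleGraph V} {S : Set V}

theorem square_induce_le_induce_square (h : ∀ z ∉ S, (G.neighborSet z ∩ S).Subsingleton) :
    G.square.induce S ≤ (G.induce S).square := by
  rintro x y ⟨hne, hadj | ⟨z, hxz, hzy⟩⟩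
  · exact ⟨ne_of_apply_ne _ hne, Or.inl hadj⟩
  by_cases hz : z ∈ S
  · exact ⟨ne_of_apply_ne _ hne, Or.inr ⟨⟨z, hz⟩, hxz, hzy⟩⟩
  · exact absurd (h z hz ⟨hxz.symm, x.2⟩ ⟨hzy, y.2⟩) hne

/-- Within distance 2 of `x`, the vertices of `S` are `y`, `z'` and neighbors of `y` other than
`x` and `y'`. -/
theorem ncard_square_neighborSet_inter_le [Finite V] {x y z y' z' : V}
    (hNx : G.neighborSet x = {y, z}) (hNz : G.neighborSet z = {x, z'}) (hx : x ∉ S) (hz : z ∉ S)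
    (hyy' : G.Adj y y') (hy' : y' ∉ S) (hxy' : x ≠ y') :
    (G.square.neighborSet x ∩ S).ncard ≤ (G.neighborSet y).ncard := by
  have hxy : G.Adj y x := (show y ∈ G.neighborSet x by simp [hNx]).symm
  have hsub : G.square.neighborSet x ∩ S ⊆ {y, z'} ∪ (G.neighborSet y \ {x, y'}) := by
    rintro w ⟨⟨-, hadj | ⟨m, hxm, hmw⟩⟩, hw⟩
    · rw [← mem_neighborSet, hNx] at hadj
      rcases hadj with rfl | rfl
      · exact Or.inl (Or.inl rfl)
      · exact absurd hw hz
    · rw [← mem_neighborSet, hNx] at hxm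
      rcases hxm with rfl | rfl
      · refine Or.inr ⟨hmw, ?_⟩
        rintro (rfl | rfl) <;> contradiction
      · rw [← mem_neighborSet, hNz] at hmw
        rcases hmw with rfl | rfl
        · exact absurd hw hx
        · exact Or.inl (Or.inr rfl)
  have hpair : ({x, y'} : Set V) ⊆ G.neighborSet y := by
    rintro _ (rfl | rfl) <;> assumption
  calc (G.square.neighborSet x ∩ S).ncard
      ≤ ({y, z'} : Set V).ncard + (G.neighborSet y \ {x, y'}).ncard :=
        (Set.ncard_le_ncard hsub).trans (Set.ncard_union_le _ _)
    _ ≤ 2 + ((G.neighborSet y).ncard - 2) := by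
        rw [Set.ncard_sdiff hpair, Set.ncard_pair hxy']
        exact Nat.add_le_add_right ((Set.ncard_insert_le _ _).trans (by simp)) _
    _ = (G.neighborSet y).ncard := by
        have := Set.ncard_le_ncard hpair
        rw [Set.ncard_pair hxy'] at this
        omega


end Square

variable {G : SimpleGraph V} {n : ℕ} {u : ℤ → V}

/-- `u` runs around a cycle of length `3 * n` of `G` (so it is `3 * n`-periodic and injective
modulo `3 * n`), and the vertices at indices not divisible by `3` have degree `2` in `G`; the
vertices at multiples of `3` are the hubs. -/
structure IsC5Cycle (G : SimpleGraph V) (n : ℕ) (u : ℤ → V) : Prop where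
  adj : ∀ j, G.Adj (u j) (u (j + 1))
  eq_iff : ∀ i j, u i = u j ↔ (3 * n : ℤ) ∣ j - i
  ncard_eq_two : ∀ j, ¬ 3 ∣ j → (G.neighborSet (u j)).ncard = 2

namespace IsC5Cycle

theorem eq_of_eq_of_sub_eq (hC : IsC5Cycle G n u) {i j i' j' : ℤ} (h : u i = u j)
    (hij : i' - i = j' - j) : u i' = u j' :=
  (hC.eq_iff _ _).2 (by rw [show j' - i' = j - i by linarith]; exact (hC.eq_iff _ _).1 h)

theorem three_dvd_sub (hC : IsC5Cycle G n u) {i j : ℤ} (h : u i = u j) : (3 : ℤ) ∣ j - i :=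
  (Dvd.intro _ rfl).trans ((hC.eq_iff i j).1 h)

theorem neighborSet_eq (hC : IsC5Cycle G n u) {j : ℤ} (hj : ¬ 3 ∣ j) :
    G.neighborSet (u j) = {u (j - 1), u (j + 1)} := by
  have hsub : {u (j - 1), u (j + 1)} ⊆ G.neighborSet (u j) := by
    rintro _ (rfl | rfl)
    · simpa using (hC.adj (j - 1)).symm
    · exact hC.adj j
  have hne : u (j - 1) ≠ u (j + 1) := fun h => by have := hC.three_dvd_sub h; omega
  have hcard := hC.ncard_eq_two j hj
  exact (Set.eq_of_subset_of_ncard_le hsub (by rw [hcard, Set.ncard_pair hne])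
    (Set.finite_of_ncard_ne_zero (by omega))).symm

theorem neighborSet_inter_subsingleton (hC : IsC5Cycle G n u) {S : Set V}
    (hS : ∀ x, x ∉ S ↔ ∃ j, ¬ 3 ∣ j ∧ u j = x) {z : V} (hz : z ∉ S) :
    (G.neighborSet z ∩ S).Subsingleton := by
  obtain ⟨j, hj, rfl⟩ := (hS z).1 hz
  have hout : ∀ i, ¬ 3 ∣ i → u i ∉ S := fun i hi => (hS _).2 ⟨i, hi, rfl⟩
  rw [hC.neighborSet_eq hj]
  rcases (by omega : ¬ 3 ∣ j + 1 ∨ ¬ 3 ∣ j - 1) with h | h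
  · refine (Set.subsingleton_singleton (a := u (j - 1))).anti ?_
    rintro _ ⟨rfl | rfl, hx⟩
    exacts [rfl, absurd hx (hout _ h)]
  · refine (Set.subsingleton_singleton (a := u (j + 1))).anti ?_
    rintro _ ⟨rfl | rfl, hx⟩
    exacts [absurd hx (hout _ h), rfl]

theorem ncard_square_neighborSet_inter_le [Finite V] (hC : IsC5Cycle G n u) {S : Set V}
    (hS : ∀ x, x ∉ S ↔ ∃ j, ¬ 3 ∣ j ∧ u j = x) {D : ℕ}
    (hhub : ∀ j, 3 ∣ j → (G.neighborSet (u j)).ncard ≤ D) {x : V} (hx : x ∉ S) :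
    (G.square.neighborSet x ∩ S).ncard ≤ D := by
  obtain ⟨j, hj, rfl⟩ := (hS x).1 hx
  have hout : ∀ i, ¬ 3 ∣ i → u i ∉ S := fun i hi => (hS _).2 ⟨i, hi, rfl⟩
  have hN : ∀ i, ¬ 3 ∣ i + 1 → G.neighborSet (u (i + 1)) = {u i, u (i + 2)} := fun i hi => by
    rw [hC.neighborSet_eq hi, add_sub_cancel_right, add_assoc, one_add_one_eq_two]
  have hne : ∀ i, u i ≠ u (i + 2) := fun i h => by have := hC.three_dvd_sub h; omega
  rcases (by omega : 3 ∣ j - 1 ∨ 3 ∣ j + 1) with h | h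
  · -- the hub is `u (j - 1)`, the other degree-2 vertex `u (j + 1)`
    refine (SimpleGraph.ncard_square_neighborSet_inter_le (y := u (j - 1)) (z := u (j + 1))
      (y' := u (j - 2)) (z' := u (j + 2)) (hC.neighborSet_eq hj) ?_ hx (hout _ (by omega))
      ?_ (hout _ (by omega)) ?_).trans (hhub _ h)
    · simpa using hN j (by omega)
    · have := (hC.adj (j - 2)).symm
      rwa [show j - 2 + 1 = j - 1 by ring] at this
    · simpa using (hne (j - 2)).symm
  · refine (SimpleGraph.ncard_square_neighborSet_inter_le (y := u (j + 1)) (z := u (j - 1))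
      (y' := u (j + 2)) (z' := u (j - 2)) ((hC.neighborSet_eq hj).trans (Set.pair_comm _ _)) ?_
      hx (hout _ (by omega)) ?_ (hout _ (by omega)) (hne j)).trans (hhub _ h)
    · have := hN (j - 2) (by omega)
      rwa [show j - 2 + 1 = j - 1 by ring, show j - 2 + 2 = j by ring, Set.pair_comm] at this
    · simpa [add_assoc] using hC.adj (j + 1)

theorem square_adj (hC : IsC5Cycle G n u) {p q : ℤ} (hp : ¬ 3 ∣ p) (hq : ¬ 3 ∣ q)
    (h : G.square.Adj (u p) (u q)) :
    u q = u (p + 1) ∨ u q = u (p + 2) ∨ u p = u (q + 1) ∨ u p = u (q + 2) := by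
  obtain ⟨hne, hadj | ⟨m, hpm, hmq⟩⟩ := h
  · rw [← mem_neighborSet, hC.neighborSet_eq hp] at hadj
    rcases hadj with h | h
    · exact Or.inr (Or.inr (Or.inl (hC.eq_of_eq_of_sub_eq h.symm (by ring))))
    · exact Or.inl h
  have hNq : m ∈ G.neighborSet (u q) → m = u (q - 1) ∨ m = u (q + 1) := by
    rw [hC.neighborSet_eq hq]; exact id
  have hne' : ∀ {i j}, u i = u j → p - i = q - j → False := fun h hij =>
    hne (hC.eq_of_eq_of_sub_eq h hij)
  rw [← mem_neighborSet, hC.neighborSet_eq hp] at hpm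
  rcases hpm with rfl | rfl
  · by_cases h3 : 3 ∣ p - 1
    · rcases hNq hmq.symm with h | h
      · exact (hne' h (by ring)).elim
      · exact Or.inr (Or.inr (Or.inr (hC.eq_of_eq_of_sub_eq h (by ring))))
    · rw [← mem_neighborSet, hC.neighborSet_eq h3] at hmq
      rcases hmq with h | h
      · exact Or.inr (Or.inr (Or.inr (hC.eq_of_eq_of_sub_eq h.symm (by ring))))
      · exact (hne' h.symm (by ring)).elim
  · by_cases h3 : 3 ∣ p + 1
    · rcases hNq hmq.symm with h | h
      · exact Or.inr (Or.inl (hC.eq_of_eq_of_sub_eq h.symm (by ring)))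
      · exact (hne' h (by ring)).elim
    · rw [← mem_neighborSet, hC.neighborSet_eq h3] at hmq
      rcases hmq with h | h
      · exact (hne' h.symm (by ring)).elim
      · exact Or.inr (Or.inl (hC.eq_of_eq_of_sub_eq h (by ring)))

theorem val_adj_of_square_adj (hC : IsC5Cycle G n u) {s t : ℕ} (hs : s < 2 * n) (ht : t < 2 * n)
    (h : G.square.Adj (u (nonMultipleOfThree s)) (u (nonMultipleOfThree t))) :
    s + 1 = t ∨ t + 1 = s ∨ (s + 1 = 2 * n ∧ t = 0) ∨ (t + 1 = 2 * n ∧ s = 0) := by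
  -- `u a = u b` forces `a ≡ b` modulo `3 * n`, and the indices involved differ by less than `3 * n`
  have hnext : ∀ {s t : ℕ} {d : ℤ}, s < 2 * n → t < 2 * n → d = 1 ∨ d = 2 →
      u (nonMultipleOfThree t) = u (nonMultipleOfThree s + d) →
      t = s + 1 ∨ (s + 1 = 2 * n ∧ t = 0) := by
    intro s t d hs ht hd h
    have hdvd := (hC.eq_iff _ _).1 h
    simp only [nonMultipleOfThree] at hdvd ⊢
    push_cast at hdvd
    by_cases hwrap : (s + s / 2 + 1 + d : ℤ) - (t + t / 2 + 1) = 3 * n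
    · omega
    · have := Int.eq_zero_of_abs_lt_dvd hdvd (abs_lt.2 ⟨by omega, by omega⟩)
      omega
  rcases hC.square_adj (not_three_dvd_nonMultipleOfThree s) (not_three_dvd_nonMultipleOfThree t) h
    with h | h | h | h
  · have := hnext hs ht (by norm_num) h; omega
  · have := hnext hs ht (by norm_num) h; omega
  · have := hnext ht hs (by norm_num) h; omega
  · have := hnext ht hs (by norm_num) h; omega

theorem choosable_two_square_induce_compl (hC : IsC5Cycle G n u) (hn : 1 ≤ n) {S : Set V}
    (hS : ∀ x, x ∉ S ↔ ∃ j, ¬ 3 ∣ j ∧ u j = x) : (G.square.induce Sᶜ).Choosable 2 := by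
  let w : Fin (2 * n) → ↥Sᶜ := fun t =>
    ⟨u (nonMultipleOfThree t), (hS _).2 ⟨_, not_three_dvd_nonMultipleOfThree t, rfl⟩⟩
  refine (cycleGraph_choosable_two (even_two_mul n)).of_comap (w := w) ?_ ?_
  swap
  · intro s t hst
    exact (cycleGraph_adj_iff_val (by omega)).2 (hC.val_adj_of_square_adj s.2 t.2 hst)
  rintro ⟨x, hx⟩
  obtain ⟨j, hj, rfl⟩ := (hS x).1 hx
  -- reduce `j` modulo `3 * n` to the residue `r`, which is `nonMultipleOfThree` of some `t < 2 * n`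
  set r := j % (3 * n : ℤ)
  have hr0 : 0 ≤ r := Int.emod_nonneg _ (by omega)
  have hr1 : r < 3 * n := Int.emod_lt_of_pos _ (by omega)
  have hr3 : r % 3 = j % 3 := Int.emod_emod_of_dvd _ (Dvd.intro _ rfl)
  refine ⟨⟨(r - r / 3 - 1).toNat, by omega⟩, Subtype.ext ((hC.eq_iff _ _).2 ?_)⟩
  have hrJ : ((nonMultipleOfThree (r - r / 3 - 1).toNat : ℕ) : ℤ) = r := by
    simp only [nonMultipleOfThree]; omega
  rw [hrJ]
  exact Int.dvd_self_sub_emod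

end IsC5Cycle

theorem isC5Cycle_periodicExtension {l : ℕ} {v : ℕ → V}
    (hl : 1 ≤ l) (hinj : Set.InjOn v (Set.Icc 1 (3 * l)))
    (hadj : ∀ j, 1 ≤ j → j < 3 * l → G.Adj (v j) (v (j + 1))) (hclose : G.Adj (v (3 * l)) (v 1))
    (hdeg2 : ∀ j, 1 ≤ j → j ≤ 3 * l → ¬ 3 ∣ j → (G.neighborSet (v j)).ncard = 2) :
    IsC5Cycle G l (periodicExtension v (3 * l)) := by
  have hn : 0 < 3 * l := by omega
  have heq : ∀ i j : ℤ, periodicExtension v (3 * l) i = periodicExtension v (3 * l) j ↔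
      ((3 * l : ℕ) : ℤ) ∣ j - i := fun i j => periodicExtension_eq_iff hn hinj
  refine ⟨fun j => ?_, fun i j => by exact_mod_cast heq i j, fun j hj => ?_⟩
  · obtain ⟨i, hi1, hi2, hji, hj⟩ := exists_periodicExtension_eq (v := v) hn j
    rw [hj]
    rcases hi2.lt_or_eq with hi | rfl
    · have hnext : periodicExtension v (3 * l) (j + 1) = v (i + 1) := by
        rw [(heq _ (i + 1 : ℕ)).2, periodicExtension_of_mem (by omega) hi]
        rw [show ((i + 1 : ℕ) : ℤ) - (j + 1) = -(j - i) by push_cast; ring]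
        exact dvd_neg.2 hji
      rw [hnext]
      exact hadj i hi1 hi
    · have hnext : periodicExtension v (3 * l) (j + 1) = v 1 := by
        rw [(heq _ (1 : ℕ)).2, periodicExtension_of_mem le_rfl hn]
        rw [show ((1 : ℕ) : ℤ) - (j + 1) = -(j - (3 * l : ℕ)) - (3 * l : ℕ) by push_cast; ring]
        exact dvd_sub (dvd_neg.2 hji) dvd_rfl
      rw [hnext]
      exact hclose
  · obtain ⟨i, hi1, hi2, hji, hj'⟩ := exists_periodicExtension_three_mul_eq (v := v) hl j
    rw [hj']
    exact hdeg2 i hi1 hi2 fun h => hj (by omega)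

end SimpleGraph

theorem config_C5_reducible_general {V : Type*} [Fintype V] (k l : ℕ) (hk : 5 ≤ k) (hl : 1 ≤ l)
    (G : SimpleGraph V)
    (v : ℕ → V) (hinj : Set.InjOn v (Set.Icc 1 (3 * l)))
    (hadj : ∀ j, 1 ≤ j → j < 3 * l → G.Adj (v j) (v (j + 1)))
    (hclose : G.Adj (v (3 * l)) (v 1))
    (hdegdvd : ∀ j, 1 ≤ j → j ≤ 3 * l → 3 ∣ j → (G.neighborSet (v j)).ncard ≤ k - 1)
    (hdeg2 : ∀ j, 1 ≤ j → j ≤ 3 * l → ¬ 3 ∣ j → (G.neighborSet (v j)).ncard = 2)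
    (hred : ((G.induce {x | ∀ j, 1 ≤ j → j ≤ 3 * l → ¬ 3 ∣ j → x ≠ v j}).square.Choosable
      (k + 1))) :
    G.square.Choosable (k + 1) := by
  set S : Set V := {x | ∀ j, 1 ≤ j → j ≤ 3 * l → ¬ 3 ∣ j → x ≠ v j}
  set u := periodicExtension v (3 * l)
  have hC : IsC5Cycle G l u := isC5Cycle_periodicExtension hl hinj hadj hclose hdeg2
  have hS : ∀ x, x ∉ S ↔ ∃ j : ℤ, ¬ 3 ∣ j ∧ u j = x := fun x => by
    constructor
    · intro hx
      simp only [S, Set.mem_ofPred_eq, not_forall, not_not] at hx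
      obtain ⟨j, hj1, hj2, hj3, rfl⟩ := hx
      exact ⟨j, by omega, periodicExtension_of_mem hj1 hj2⟩
    · rintro ⟨j, hj, rfl⟩ hS
      obtain ⟨i, hi1, hi2, hdvd, hi⟩ := exists_periodicExtension_three_mul_eq (v := v) hl j
      exact hS i hi1 hi2 (by omega) hi
  have hhub : ∀ j : ℤ, 3 ∣ j → (G.neighborSet (u j)).ncard ≤ k - 1 := fun j hj => by
    obtain ⟨i, hi1, hi2, hdvd, hi⟩ := exists_periodicExtension_three_mul_eq (v := v) hl j
    rw [show u j = v i from hi]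
    exact hdegdvd i hi1 hi2 (by omega)
  refine Choosable.of_induce S (d := 2)
    (hred.mono_left (square_induce_le_induce_square fun _ => hC.neighborSet_inter_subsingleton hS))
    (hC.choosable_two_square_induce_compl hl hS) fun x hx => ?_
  have := hC.ncard_square_neighborSet_inter_le hS hhub hx
  omega

/-- (C5): a `3ℓ`-cycle `v₁v₂…v₃ℓ` with `d(vᵢ) ≤ k-1` when `3 ∣ i` and `d(vᵢ) = 2`
otherwise is `(k+1)`-reducible, for `k ≥ 5`. -/
theorem config_C5_reducible {V : Type*} [Fintype V] (k l : ℕ) (hk : 5 ≤ k) (hl : 1 ≤ l)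
    (G : SimpleGraph V) (hΔ : ∀ z, (G.neighborSet z).ncard ≤ k)
    (v : ℕ → V) (hinj : Set.InjOn v (Set.Icc 1 (3 * l)))
    (hadj : ∀ j, 1 ≤ j → j < 3 * l → G.Adj (v j) (v (j + 1)))
    (hclose : G.Adj (v (3 * l)) (v 1))
    (hdegdvd : ∀ j, 1 ≤ j → j ≤ 3 * l → 3 ∣ j → (G.neighborSet (v j)).ncard ≤ k - 1)
    (hdeg2 : ∀ j, 1 ≤ j → j ≤ 3 * l → ¬ 3 ∣ j → (G.neighborSet (v j)).ncard = 2)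
    (hred : ((G.induce {x | ∀ j, 1 ≤ j → j ≤ 3 * l → ¬ 3 ∣ j → x ≠ v j}).square.Choosable
      (k + 1))) :
    G.square.Choosable (k + 1) :=
  config_C5_reducible_general k l hk hl G v hinj hadj hclose hdegdvd hdeg2 hred
end
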